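/- arXiv:1110.4302 — 2 statements merged into one kernel-verified Lean document; each statement's English description precedes it below -/
import Mathlib

section
/- Assume the graph G is connected and D > 0. Let a : [0,∞) → ℝ^L be a differentiable solution of a'(t) = f(a(t)) with a_i(0) ≥ 0 for all i and ∑_{k=1}^{L} a_k(0) > 0. Then for every index i, liminf_{t→∞} a_i(t) > 0; in particular no component of the solution tends to 0 as t → ∞. -/
/-!
The total mass `S = ∑ a_k` is conserved, since `f` is a sum of fluxes that are antisymmetric
along each edge. The solution stays nonnegative: at the first time a component touches the
barrier `-ε e^{Kt}`, every `N_i` is at least `κ / 2`, so the transport term is `O(ε)` while the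
diffusion term is nonnegative, and a large `K` makes the barrier move down faster than the
component can. Once `a ≥ 0` and the mass is fixed, `y_i = a_i e^{Ct}` with `C = D L + T S / κ`
satisfies `y_i' ≥ D ∑_{k ~ i} y_k`; hence `y` is nondecreasing and passes a fraction `D` of its
value across every edge in unit time. Following a path of length `< L` from a vertex carrying at
least the average mass `S / L` bounds every `a_i(s)`, `s ≥ L`, below by
`min D 1 ^ L * e^{-CL} * S / L`.
-/

open Finset Filter

/-- `auxN G κ a i = κ + ∑_{j ~ i} a_j`. -/
noncomputable def auxN {L : ℕ} (G : SimpleGraph (Fin L)) [DecidableRel G.Adj] (κ : ℝ)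
    (a : Fin L → ℝ) (i : Fin L) : ℝ :=
  κ + ∑ j ∈ G.neighborFinset i, a j

/-- The auxin transport vector field
`f_i(a) = D·∑_{k ~ i}(a_k − a_i) + T·∑_{k ~ i}(a_k·a_i/N_k(a) − a_i·a_k/N_i(a))`. -/
noncomputable def auxF {L : ℕ} (G : SimpleGraph (Fin L)) [DecidableRel G.Adj] (κ D T : ℝ)
    (a : Fin L → ℝ) (i : Fin L) : ℝ :=
  D * ∑ k ∈ G.neighborFinset i, (a k - a i) +
    T * ∑ k ∈ G.neighborFinset i,
      (a k * a i / auxN G κ a k - a i * a k / auxN G κ a i)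

open Set Topology

theorem mul_sub_le_sub_of_le_hasDerivAt {f f' : ℝ → ℝ} {c x y : ℝ} (hxy : x ≤ y)
    (hf : ∀ s ∈ Icc x y, HasDerivAt f (f' s) s) (hc : ∀ s ∈ Icc x y, c ≤ f' s) :
    c * (y - x) ≤ f y - f x :=
  (convex_Icc x y).mul_sub_le_image_sub_of_le_deriv
    (fun s hs => (hf s hs).continuousAt.continuousWithinAt)
    (fun s hs => (hf s (interior_subset hs)).differentiableAt.differentiableWithinAt)
    (fun s hs => (hf s (interior_subset hs)).deriv ▸ hc s (interior_subset hs))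
    x (left_mem_Icc.2 hxy) y (right_mem_Icc.2 hxy) hxy

theorem exists_first_zero {ι : Type*} [Finite ι] {g : ι → ℝ → ℝ} {T : ℝ}
    (hg : ∀ j, ContinuousOn (g j) (Icc 0 T)) (h0 : ∀ j, 0 < g j 0)
    {i : ι} {s : ℝ} (hs : s ∈ Icc 0 T) (hi : g i s ≤ 0) :
    ∃ t₀ ∈ Ioc 0 T, ∃ i, g i t₀ = 0 ∧ ∀ j, ∀ u ∈ Icc 0 t₀, 0 ≤ g j u := by
  set B := ⋃ j, Icc 0 T ∩ g j ⁻¹' Iic 0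
  have hB : IsClosed B := isClosed_iUnion_of_finite fun j =>
    (hg j).preimage_isClosed_of_isClosed isClosed_Icc isClosed_Iic
  have hbdd : BddBelow B := ⟨0, fun u hu => by
    obtain ⟨j, hu, -⟩ := mem_iUnion.1 hu
    exact hu.1⟩
  obtain ⟨i₀, ⟨ht₀, ht₀T⟩, hi₀⟩ :=
    mem_iUnion.1 (hB.csInf_mem ⟨s, mem_iUnion.2 ⟨i, hs, hi⟩⟩ hbdd)
  set t₀ := sInf B
  have hpos : 0 < t₀ := ht₀.lt_of_ne fun h => (h0 i₀).not_ge (h ▸ hi₀)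
  have hbefore : ∀ j, ∀ u ∈ Ico 0 t₀, 0 < g j u := fun j u hu => by
    by_contra! h
    exact hu.2.not_ge (csInf_le hbdd (mem_iUnion.2 ⟨j, ⟨hu.1, hu.2.le.trans ht₀T⟩, h⟩))
  have hnonneg : ∀ j, ∀ u ∈ Icc 0 t₀, 0 ≤ g j u := by
    intro j u hu
    rcases hu.2.lt_or_eq with hlt | heq
    · exact (hbefore j u ⟨hu.1, hlt⟩).le
    · rw [heq]
      refine ContinuousWithinAt.closure_le (s := Ico 0 t₀) ?_ continuousWithinAt_const
        ((hg j t₀ ⟨hpos.le, ht₀T⟩).mono (Ico_subset_Icc_self.trans (Icc_subset_Icc_right ht₀T)))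
        fun u hu => (hbefore j u hu).le
      rw [closure_Ico hpos.ne]
      exact right_mem_Icc.2 hpos.le
  exact ⟨t₀, ⟨hpos, ht₀T⟩, i₀, le_antisymm hi₀ (hnonneg i₀ t₀ ⟨hpos.le, le_rfl⟩), hnonneg⟩

theorem HasDerivAt.nonpos_of_isLocalMinOn_Iic {g : ℝ → ℝ} {d t : ℝ} (hg : HasDerivAt g d t)
    (hmin : IsLocalMinOn g (Iic t) t) : d ≤ 0 := by
  have hcone : (-1 : ℝ) ∈ posTangentConeAt (Iic t) t :=
    mem_posTangentConeAt_of_segment_subset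
      ((convex_Iic t).segment_subset (mem_Iic.2 le_rfl) (mem_Iic.2 (by linarith)))
  simpa using hmin.hasFDerivWithinAt_nonneg hg.hasDerivWithinAt.hasFDerivWithinAt hcone

theorem sum_sum_neighborFinset_eq_zero {V : Type*} [Fintype V] (G : SimpleGraph V)
    [DecidableRel G.Adj] {g : V → V → ℝ} (hg : ∀ i k, g k i = -g i k) :
    ∑ i, ∑ k ∈ G.neighborFinset i, g i k = 0 := by
  simp only [SimpleGraph.neighborFinset_eq_filter, sum_filter]
  have h : ∑ i, ∑ k, (if G.Adj i k then g i k else 0)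
      = ∑ i, ∑ k, -(if G.Adj i k then g i k else 0) := by
    rw [sum_comm]
    refine sum_congr rfl fun i _ => sum_congr rfl fun k _ => ?_
    simp only [G.adj_comm k i, hg k i]
    split_ifs <;> simp
  simp only [sum_neg_distrib] at h
  linarith

theorem pow_mul_le_of_walk {V : Type*} {G : SimpleGraph V} {y : ℝ → V → ℝ} {r : ℝ}
    (hr0 : 0 ≤ r) (hr1 : r ≤ 1)
    (hy0 : ∀ t, 0 ≤ t → ∀ i, 0 ≤ y t i)
    (hmono : ∀ t s, 0 ≤ t → t ≤ s → ∀ i, y t i ≤ y s i)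
    (hadj : ∀ t, 0 ≤ t → ∀ j v, G.Adj j v → r * y t j ≤ y (t + 1) v)
    {j w : V} (p : G.Walk j w) {n : ℕ} (hn : p.length ≤ n) {t : ℝ} (ht : 0 ≤ t) :
    r ^ n * y t j ≤ y (t + n) w := by
  induction p generalizing n t with
  | nil =>
    calc r ^ n * y t _ ≤ 1 * y t _ :=
          mul_le_mul_of_nonneg_right (pow_le_one₀ hr0 hr1) (hy0 t ht _)
      _ ≤ y (t + n) _ := by rw [one_mul]; exact hmono t _ ht (by simp) _
  | cons hjv q ih =>
    obtain ⟨m, rfl⟩ : ∃ m, n = m + 1 := ⟨n - 1, by simp at hn; omega⟩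
    calc r ^ (m + 1) * y t _ = r ^ m * (r * y t _) := by ring
      _ ≤ r ^ m * y (t + 1) _ := mul_le_mul_of_nonneg_left (hadj t ht _ _ hjv) (pow_nonneg hr0 m)
      _ ≤ y (t + 1 + m) _ := ih (by simp at hn; omega) (by linarith)
      _ = y (t + ↑(m + 1)) _ := by push_cast; ring_nf

section Cooperative

variable {V : Type*} [Fintype V] {G : SimpleGraph V} [DecidableRel G.Adj]
  {y y' : ℝ → V → ℝ} {D : ℝ}

theorem le_of_hasDerivAt_of_sum_neighborFinset_le
    (hy : ∀ t, 0 ≤ t → ∀ i, HasDerivAt (fun s => y s i) (y' t i) t)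
    (hy0 : ∀ t, 0 ≤ t → ∀ i, 0 ≤ y t i) (hD : 0 ≤ D)
    (hy' : ∀ t, 0 ≤ t → ∀ i, D * ∑ k ∈ G.neighborFinset i, y t k ≤ y' t i)
    {t s : ℝ} (ht : 0 ≤ t) (hts : t ≤ s) (i : V) : y t i ≤ y s i := by
  have h := mul_sub_le_sub_of_le_hasDerivAt hts (fun u hu => hy u (ht.trans hu.1) i)
    fun u hu => (mul_nonneg hD (sum_nonneg fun k _ => hy0 u (ht.trans hu.1) k)).trans
      (hy' u (ht.trans hu.1) i)
  linarith

theorem mul_le_of_hasDerivAt_of_sum_neighborFinset_le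
    (hy : ∀ t, 0 ≤ t → ∀ i, HasDerivAt (fun s => y s i) (y' t i) t)
    (hy0 : ∀ t, 0 ≤ t → ∀ i, 0 ≤ y t i) (hD : 0 ≤ D)
    (hy' : ∀ t, 0 ≤ t → ∀ i, D * ∑ k ∈ G.neighborFinset i, y t k ≤ y' t i)
    {t : ℝ} (ht : 0 ≤ t) {j v : V} (hjv : G.Adj j v) : D * y t j ≤ y (t + 1) v := by
  have hgrowth : ∀ s ∈ Icc t (t + 1), D * y t j ≤ y' s v := fun s hs => by
    have hs0 : 0 ≤ s := ht.trans hs.1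
    calc D * y t j ≤ D * y s j := mul_le_mul_of_nonneg_left
          (le_of_hasDerivAt_of_sum_neighborFinset_le hy hy0 hD hy' ht hs.1 j) hD
      _ ≤ D * ∑ k ∈ G.neighborFinset v, y s k := mul_le_mul_of_nonneg_left
          (single_le_sum (fun k _ => hy0 s hs0 k) ((G.mem_neighborFinset v j).2 hjv.symm)) hD
      _ ≤ y' s v := hy' s hs0 v
  have h := mul_sub_le_sub_of_le_hasDerivAt (by linarith) (fun s hs => hy s (ht.trans hs.1) v)
    hgrowth
  linarith [hy0 t ht v]

theorem pow_card_mul_le_of_connected (hG : G.Connected)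
    (hy : ∀ t, 0 ≤ t → ∀ i, HasDerivAt (fun s => y s i) (y' t i) t)
    (hy0 : ∀ t, 0 ≤ t → ∀ i, 0 ≤ y t i) (hD : 0 ≤ D)
    (hy' : ∀ t, 0 ≤ t → ∀ i, D * ∑ k ∈ G.neighborFinset i, y t k ≤ y' t i)
    {t : ℝ} (ht : 0 ≤ t) (j i : V) :
    min D 1 ^ Fintype.card V * y t j ≤ y (t + Fintype.card V) i := by
  classical
  obtain ⟨p, hp⟩ : ∃ p : G.Walk j i, p.IsPath := ⟨_, (hG.preconnected j i).some.bypass_isPath⟩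
  refine pow_mul_le_of_walk (le_min hD zero_le_one) (min_le_right _ _) hy0
    (fun t s ht hts => le_of_hasDerivAt_of_sum_neighborFinset_le hy hy0 hD hy' ht hts)
    (fun t ht j v hjv => ?_) p hp.length_lt.le ht
  exact (mul_le_mul_of_nonneg_right (min_le_left _ _) (hy0 t ht j)).trans
    (mul_le_of_hasDerivAt_of_sum_neighborFinset_le hy hy0 hD hy' ht hjv)

end Cooperative

theorem abs_div_le_of_half_le {x N M κ : ℝ} (hκ : 0 < κ) (hx : |x| ≤ M) (hN : κ / 2 ≤ N) :
    |x / N| ≤ 2 * M / κ := by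
  have hN0 : 0 < N := by linarith
  rw [abs_div, abs_of_pos hN0, div_le_div_iff₀ hN0 hκ]
  nlinarith [abs_nonneg x]

section Auxin

variable {L : ℕ} (G : SimpleGraph (Fin L)) [DecidableRel G.Adj] {κ D T : ℝ}

theorem auxF_eq_sum_sub_add_mul_sum (κ D T : ℝ) (b : Fin L → ℝ) (i : Fin L) :
    auxF G κ D T b i = D * ∑ k ∈ G.neighborFinset i, (b k - b i) +
      T * b i * ∑ k ∈ G.neighborFinset i, (b k / auxN G κ b k - b k / auxN G κ b i) := by
  rw [auxF, mul_assoc, mul_sum (a := b i)]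
  congr 2
  exact sum_congr rfl fun k _ => by ring

theorem sum_auxF_eq_zero (κ D T : ℝ) (b : Fin L → ℝ) : ∑ i, auxF G κ D T b i = 0 := by
  simp only [auxF, sum_add_distrib, ← mul_sum]
  rw [sum_sum_neighborFinset_eq_zero G (g := fun i k => b k - b i) fun _ _ => by ring,
    sum_sum_neighborFinset_eq_zero G
      (g := fun i k => b k * b i / auxN G κ b k - b i * b k / auxN G κ b i) fun _ _ => by ring]
  ring

theorem card_neighborFinset_le (i : Fin L) : ((G.neighborFinset i).card : ℝ) ≤ L := by
  exact_mod_cast (card_le_univ _).trans_eq (Fintype.card_fin L)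

theorem sub_mul_le_auxN {b : Fin L → ℝ} {e : ℝ} (he : 0 ≤ e) (hb : ∀ j, -e ≤ b j) (j : Fin L) :
    κ - L * e ≤ auxN G κ b j := by
  have h : ∑ k ∈ G.neighborFinset j, -e ≤ ∑ k ∈ G.neighborFinset j, b k :=
    sum_le_sum fun k _ => hb k
  rw [sum_const, nsmul_eq_mul] at h
  have := mul_le_mul_of_nonneg_right (card_neighborFinset_le G j) he
  rw [auxN]
  linarith

theorem neg_le_auxF_of_eq_neg (hκ : 0 < κ) (hD : 0 ≤ D) (hT : 0 ≤ T) {b : Fin L → ℝ}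
    {e M : ℝ} (he : 0 ≤ e) (hLe : L * e ≤ κ / 2) (hb : ∀ j, -e ≤ b j) (hM : ∀ j, |b j| ≤ M)
    {i : Fin L} (hbi : b i = -e) :
    -(4 * T * L * M / κ * e) ≤ auxF G κ D T b i := by
  have hN : ∀ j, κ / 2 ≤ auxN G κ b j := fun j => by linarith [sub_mul_le_auxN G (κ := κ) he hb j]
  have hdiff : 0 ≤ D * ∑ k ∈ G.neighborFinset i, (b k - b i) :=
    mul_nonneg hD (sum_nonneg fun k _ => by linarith [hb k])
  have hF := auxF_eq_sum_sub_add_mul_sum G κ D T b i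
  set X := ∑ k ∈ G.neighborFinset i, (b k / auxN G κ b k - b k / auxN G κ b i)
  have hX : X ≤ L * (4 * M / κ) := by
    have hM0 : 0 ≤ M := (abs_nonneg _).trans (hM i)
    calc X ≤ ∑ k ∈ G.neighborFinset i, 4 * M / κ := sum_le_sum fun k _ => by
            have h₁ := abs_div_le_of_half_le hκ (hM k) (hN k)
            have h₂ := abs_div_le_of_half_le hκ (hM k) (hN i)
            linarith [le_abs_self (b k / auxN G κ b k), neg_abs_le (b k / auxN G κ b i),
              show 4 * M / κ = 2 * M / κ + 2 * M / κ by ring]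
      _ ≤ L * (4 * M / κ) := by
            rw [sum_const, nsmul_eq_mul]
            exact mul_le_mul_of_nonneg_right (card_neighborFinset_le G i) (by positivity)
  have hTX := mul_le_mul_of_nonneg_left hX (mul_nonneg hT he)
  linarith [show T * b i * X = -(T * e * X) by rw [hbi]; ring,
    show T * e * (L * (4 * M / κ)) = 4 * T * L * M / κ * e by ring]

theorem sub_mul_le_auxF_of_nonneg (hκ : 0 < κ) (hD : 0 ≤ D) (hT : 0 ≤ T) {b : Fin L → ℝ}
    (hb : ∀ j, 0 ≤ b j) {S : ℝ} (hS : ∑ k, b k ≤ S) (i : Fin L) :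
    D * ∑ k ∈ G.neighborFinset i, b k - (D * L + T * S / κ) * b i ≤ auxF G κ D T b i := by
  have hN : ∀ j, κ ≤ auxN G κ b j := fun j =>
    le_add_of_nonneg_right (sum_nonneg fun k _ => hb k)
  have hdiff : D * ∑ k ∈ G.neighborFinset i, b k - D * L * b i
      ≤ D * ∑ k ∈ G.neighborFinset i, (b k - b i) := by
    rw [sum_sub_distrib, sum_const, nsmul_eq_mul, mul_sub, mul_assoc]
    exact sub_le_sub_left (mul_le_mul_of_nonneg_left
      (mul_le_mul_of_nonneg_right (card_neighborFinset_le G i) (hb i)) hD) _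
  have hF := auxF_eq_sum_sub_add_mul_sum G κ D T b i
  set X := ∑ k ∈ G.neighborFinset i, (b k / auxN G κ b k - b k / auxN G κ b i)
  have hX : -(S / κ) ≤ X := by
    calc -(S / κ) ≤ -∑ k ∈ G.neighborFinset i, b k / κ := by
          rw [← sum_div, neg_le_neg_iff]
          exact div_le_div_of_nonneg_right
            ((sum_le_univ_sum_of_nonneg hb).trans hS) hκ.le
      _ = ∑ k ∈ G.neighborFinset i, -(b k / κ) := by rw [sum_neg_distrib]
      _ ≤ X := sum_le_sum fun k _ => by
          have h₁ : 0 ≤ b k / auxN G κ b k := div_nonneg (hb k) (hκ.le.trans (hN k))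
          have h₂ : b k / auxN G κ b i ≤ b k / κ := div_le_div_of_nonneg_left (hb k) hκ (hN i)
          linarith
  have hTX := mul_le_mul_of_nonneg_left hX (mul_nonneg hT (hb i))
  linarith [show T * b i * -(S / κ) = -(T * S / κ * b i) by ring]

variable {a : ℝ → Fin L → ℝ}

theorem sum_eq_of_hasDerivAt_auxF (hderiv : ∀ t, 0 ≤ t → HasDerivAt a (auxF G κ D T (a t)) t)
    {t : ℝ} (ht : 0 ≤ t) : ∑ k, a t k = ∑ k, a 0 k := by
  have hsum : ∀ s, 0 ≤ s → HasDerivAt (fun s => ∑ k, a s k) 0 s := fun s hs => by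
    simpa [sum_auxF_eq_zero] using
      HasDerivAt.fun_sum (u := univ) fun k _ => hasDerivAt_pi.1 (hderiv s hs) k
  exact constant_of_has_deriv_right_zero
    (fun s hs => (hsum s hs.1).continuousAt.continuousWithinAt)
    (fun s hs => (hsum s hs.1).hasDerivWithinAt) t ⟨ht, le_rfl⟩

theorem nonneg_of_hasDerivAt_auxF (hκ : 0 < κ) (hD : 0 ≤ D) (hT : 0 ≤ T)
    (hderiv : ∀ t, 0 ≤ t → HasDerivAt a (auxF G κ D T (a t)) t) (h0 : ∀ i, 0 ≤ a 0 i)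
    {t : ℝ} (ht : 0 ≤ t) (i : Fin L) : 0 ≤ a t i := by
  have hL : (0 : ℝ) < L := by exact_mod_cast i.pos
  obtain ⟨M, hM⟩ := isCompact_Icc.exists_bound_of_continuousOn (f := a) (s := Icc 0 t)
    fun s hs => (hderiv s hs.1).continuousAt.continuousWithinAt
  have hM0 : 0 ≤ M := (norm_nonneg _).trans (hM 0 ⟨le_rfl, ht⟩)
  have habs : ∀ s ∈ Icc 0 t, ∀ j, |a s j| ≤ M := fun s hs j =>
    (norm_le_pi_norm (a s) j).trans (hM s hs)
  set K := 4 * T * L * M / κ + 1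
  have hbarrier : ∀ ε, 0 < ε → L * (ε * Real.exp (K * t)) ≤ κ / 2 →
      0 < a t i + ε * Real.exp (K * t) := by
    intro ε hε hsmall
    by_contra! hneg
    obtain ⟨t₀, ⟨ht₀, ht₀t⟩, i₀, hzero, hfirst⟩ :=
      exists_first_zero (g := fun j s => a s j + ε * Real.exp (K * s))
        (fun j s hs => ((hasDerivAt_pi.1 (hderiv s hs.1) j).continuousAt.add
          (by fun_prop)).continuousWithinAt)
        (fun j => by simp only [mul_zero, Real.exp_zero, mul_one]; linarith [h0 j])
        ⟨ht, le_rfl⟩ hneg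
    set e := ε * Real.exp (K * t₀)
    have he : 0 < e := by positivity
    have hLe : L * e ≤ κ / 2 := le_trans (mul_le_mul_of_nonneg_left (mul_le_mul_of_nonneg_left
      (Real.exp_le_exp.2 (by gcongr)) hε.le) hL.le) hsmall
    have hF := neg_le_auxF_of_eq_neg G hκ hD hT he.le hLe
      (fun j => by linarith [hfirst j t₀ ⟨ht₀.le, le_rfl⟩]) (habs t₀ ⟨ht₀.le, ht₀t⟩)
      (i := i₀) (by linarith [hzero])
    have hderiv₀ : HasDerivAt (fun s => a s i₀ + ε * Real.exp (K * s))
        (auxF G κ D T (a t₀) i₀ + K * e) t₀ := by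
      refine ((hasDerivAt_pi.1 (hderiv t₀ ht₀.le) i₀).fun_add
        ((((hasDerivAt_id t₀).const_mul K).exp).const_mul ε)).congr_deriv ?_
      simp only [e, id, mul_one]
      ring
    have hmin : IsLocalMinOn (fun s => a s i₀ + ε * Real.exp (K * s)) (Iic t₀) t₀ := by
      filter_upwards [Icc_mem_nhdsLE ht₀] with s hs
      exact hzero.trans_le (hfirst i₀ s hs)
    -- `K` exceeds the rate `4 T L M / κ` at which transport can push `a_{i₀}` below `-e`.
    have := hderiv₀.nonpos_of_isLocalMinOn_Iic hmin
    linarith [show K * e = 4 * T * L * M / κ * e + e by ring]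
  have hlim : Tendsto (fun ε => a t i + ε * Real.exp (K * t)) (𝓝[>] 0) (𝓝 (a t i)) := by
    have : Continuous fun ε : ℝ => a t i + ε * Real.exp (K * t) := by fun_prop
    simpa using (this.tendsto 0).mono_left nhdsWithin_le_nhds
  refine ge_of_tendsto hlim ?_
  filter_upwards [Ioo_mem_nhdsGT (show 0 < κ / (2 * L * Real.exp (K * t)) by positivity)]
    with ε hε
  refine (hbarrier ε hε.1 ?_).le
  have := hε.2
  rw [lt_div_iff₀ (by positivity)] at this
  linarith

theorem exists_pos_eventually_le_of_hasDerivAt_auxF (hG : G.Connected) (hκ : 0 < κ) (hD : 0 < D)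
    (hT : 0 ≤ T) (hderiv : ∀ t, 0 ≤ t → HasDerivAt a (auxF G κ D T (a t)) t)
    (h0 : ∀ i, 0 ≤ a 0 i) (hpos : 0 < ∑ k, a 0 k) (i : Fin L) :
    ∃ c > 0, ∀ᶠ s in atTop, c ≤ a s i := by
  set S := ∑ k, a 0 k
  set C := D * L + T * S / κ
  have hL : (0 : ℝ) < L := by exact_mod_cast i.pos
  have hnn := fun t (ht : 0 ≤ t) => nonneg_of_hasDerivAt_auxF G hκ hD.le hT hderiv h0 ht
  have hmass := fun t (ht : 0 ≤ t) => sum_eq_of_hasDerivAt_auxF G hderiv ht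
  set y : ℝ → Fin L → ℝ := fun s j => a s j * Real.exp (C * s)
  have hy : ∀ t, 0 ≤ t → ∀ j, HasDerivAt (fun s => y s j)
      ((auxF G κ D T (a t) j + C * a t j) * Real.exp (C * t)) t := fun t ht j =>
    ((hasDerivAt_pi.1 (hderiv t ht) j).fun_mul
      ((hasDerivAt_id t).const_mul C).exp).congr_deriv (by simp only [id, mul_one]; ring)
  have hy' : ∀ t, 0 ≤ t → ∀ j, D * ∑ k ∈ G.neighborFinset j, y t k ≤
      (auxF G κ D T (a t) j + C * a t j) * Real.exp (C * t) := fun t ht j => by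
    have := sub_mul_le_auxF_of_nonneg G hκ hD.le hT (hnn t ht) (hmass t ht).le j
    simp only [y, ← sum_mul, ← mul_assoc]
    exact mul_le_mul_of_nonneg_right (by linarith) (Real.exp_pos _).le
  refine ⟨min D 1 ^ L * (S / L) * Real.exp (-(C * L)), by positivity, ?_⟩
  filter_upwards [eventually_ge_atTop (L : ℝ)] with s hs
  obtain ⟨k, -, hk⟩ := exists_le_of_sum_le (univ_nonempty_iff.2 ⟨i⟩)
    (f := fun _ => S / L) (g := a (s - L)) (by
      rw [sum_const, card_univ, Fintype.card_fin, nsmul_eq_mul, mul_div_cancel₀ _ hL.ne',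
        hmass (s - L) (by linarith)])
  have h := pow_card_mul_le_of_connected hG hy
    (fun t ht j => mul_nonneg (hnn t ht j) (Real.exp_pos _).le) hD.le hy' (sub_nonneg.2 hs) k i
  simp only [Fintype.card_fin, sub_add_cancel, y] at h
  rw [← mul_le_mul_iff_of_pos_right (Real.exp_pos (C * s))]
  calc min D 1 ^ L * (S / L) * Real.exp (-(C * L)) * Real.exp (C * s)
      = min D 1 ^ L * (S / L * Real.exp (C * (s - L))) := by
        rw [mul_sub, sub_eq_add_neg, Real.exp_add]; ring
    _ ≤ min D 1 ^ L * (a (s - L) k * Real.exp (C * (s - L))) := by gcongr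
    _ ≤ a s i * Real.exp (C * s) := h

end Auxin

theorem auxin_liminf_pos_general {L : ℕ} (G : SimpleGraph (Fin L)) [DecidableRel G.Adj]
    (hG : G.Connected) (κ D T : ℝ) (hκ : 0 < κ) (hD : 0 < D) (hT : 0 < T)
    (a : ℝ → Fin L → ℝ)
    (hderiv : ∀ t, 0 ≤ t → HasDerivAt a (auxF G κ D T (a t)) t)
    (hnonneg : ∀ i, 0 ≤ a 0 i)
    (hpos : 0 < ∑ k, a 0 k) :
    ∀ i, 0 < Filter.liminf (fun t => a t i) Filter.atTop ∧
      ¬ Filter.Tendsto (fun t => a t i) Filter.atTop (nhds 0) := by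
  intro i
  obtain ⟨c, hc, hlow⟩ :=
    exists_pos_eventually_le_of_hasDerivAt_auxF G hG hκ hD hT.le hderiv hnonneg hpos i
  have hup : ∀ᶠ s in atTop, a s i ≤ ∑ k, a 0 k := by
    filter_upwards [eventually_ge_atTop 0] with s hs
    rw [← sum_eq_of_hasDerivAt_auxF G hderiv hs]
    exact single_le_sum
      (fun k _ => nonneg_of_hasDerivAt_auxF G hκ hD.le hT.le hderiv hnonneg hs k) (mem_univ i)
  have hliminf : 0 < liminf (fun t => a t i) atTop :=
    hc.trans_le (le_liminf_of_le (isBoundedUnder_of_eventually_le hup).isCoboundedUnder_ge hlow)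
  exact ⟨hliminf, fun h => hliminf.ne' h.liminf_eq⟩

/-- For a connected graph, `D > 0`, and a nonnegative solution with positive
total initial mass, each component has strictly positive inferior limit at infinity; in
particular no component tends to `0`. -/
theorem auxin_liminf_pos {L : ℕ} (hL : 1 ≤ L) (G : SimpleGraph (Fin L)) [DecidableRel G.Adj]
    (hG : G.Connected) (κ D T : ℝ) (hκ : 0 < κ) (hD : 0 < D) (hT : 0 < T)
    (a : ℝ → Fin L → ℝ)
    (hderiv : ∀ t, 0 ≤ t → HasDerivAt a (auxF G κ D T (a t)) t)
    (hnonneg : ∀ i, 0 ≤ a 0 i)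
    (hpos : 0 < ∑ k, a 0 k) :
    ∀ i, 0 < Filter.liminf (fun t => a t i) Filter.atTop ∧
      ¬ Filter.Tendsto (fun t => a t i) Filter.atTop (nhds 0) :=
  auxin_liminf_pos_general G hG κ D T hκ hD hT a hderiv hnonneg hpos
end

section
/- Assume G is connected and both D > 0 and T > 0. For every a ∈ ℝ^L with all components strictly positive, f(a) = 0 if and only if there exists a constant c ∈ ℝ such that (a_i − D/T)·N_i(a) + a_i = c·a_i·N_i(a) for every i = 1,…,L. -/
open Finset Filter

/-!
With the potential `φ_i = 1/N_i − (D/T)/a_i` the field factors as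
`f_i(a) = T·a_i·∑_{k ~ i} a_k (φ_k − φ_i)`, so for positive `a` a zero of `f` is a function that is
harmonic for the weighted Laplacian `∑_{k ~ i} a_k (φ_k − φ_i)`. Its Dirichlet energy
`∑_i ∑_{k ~ i} a_i a_k (φ_k − φ_i)²` then vanishes, so `φ` is constant on a connected graph;
and `φ_i = c − 1` is the quadratic relation divided by `a_i N_i`.
-/

namespace SimpleGraph

theorem Preconnected.eq_of_forall_adj {V α : Type*} {G : SimpleGraph V} (hG : G.Preconnected)
    {φ : V → α} (h : ∀ i j, G.Adj i j → φ i = φ j) (i j : V) : φ i = φ j := by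
  obtain ⟨w⟩ := hG i j
  induction w with
  | nil => rfl
  | cons hadj _ ih => exact (h _ _ hadj).trans ih

variable {V : Type*} [Fintype V] (G : SimpleGraph V) [DecidableRel G.Adj]

theorem sum_sum_neighborFinset_comm {M : Type*} [AddCommMonoid M] (F : V → V → M) :
    ∑ i, ∑ k ∈ G.neighborFinset i, F i k = ∑ i, ∑ k ∈ G.neighborFinset i, F k i :=
  Finset.sum_comm' fun i k => by simp [G.adj_comm]

theorem dirichlet_energy_eq (w φ : V → ℝ) :
    ∑ i, ∑ k ∈ G.neighborFinset i, w i * w k * (φ k - φ i) ^ 2 =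
      -2 * ∑ i, w i * φ i * ∑ k ∈ G.neighborFinset i, w k * (φ k - φ i) := by
  have hswap := G.sum_sum_neighborFinset_comm fun i k => w i * w k * (φ k - φ i) * φ k
  calc ∑ i, ∑ k ∈ G.neighborFinset i, w i * w k * (φ k - φ i) ^ 2
      = ∑ i, ∑ k ∈ G.neighborFinset i, w i * w k * (φ k - φ i) * φ k
          - ∑ i, ∑ k ∈ G.neighborFinset i, w i * w k * (φ k - φ i) * φ i := by
        rw [← Finset.sum_sub_distrib]
        exact Finset.sum_congr rfl fun i _ => by
          rw [← Finset.sum_sub_distrib]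
          exact Finset.sum_congr rfl fun k _ => by ring
    _ = -2 * ∑ i, w i * φ i * ∑ k ∈ G.neighborFinset i, w k * (φ k - φ i) := by
        simp only [hswap, Finset.mul_sum, ← Finset.sum_sub_distrib]
        exact Finset.sum_congr rfl fun i _ => Finset.sum_congr rfl fun k _ => by ring

variable {G}

theorem Preconnected.weighted_harmonic_iff (hG : G.Preconnected) {w : V → ℝ}
    (hw : ∀ i, 0 < w i) (φ : V → ℝ) :
    (∀ i, ∑ k ∈ G.neighborFinset i, w k * (φ k - φ i) = 0) ↔ ∀ i j, φ i = φ j := by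
  refine ⟨fun hφ => hG.eq_of_forall_adj fun i k hik => ?_,
    fun hφ i => Finset.sum_eq_zero fun k _ => by rw [hφ k i, sub_self, mul_zero]⟩
  have hterm_nonneg : ∀ i k, 0 ≤ w i * w k * (φ k - φ i) ^ 2 := fun i k =>
    mul_nonneg (mul_pos (hw i) (hw k)).le (sq_nonneg _)
  have henergy : ∑ i, ∑ k ∈ G.neighborFinset i, w i * w k * (φ k - φ i) ^ 2 = 0 := by
    simp [G.dirichlet_energy_eq, hφ]
  have hi := (Finset.sum_eq_zero_iff_of_nonneg fun i _ =>
    Finset.sum_nonneg fun k _ => hterm_nonneg i k).mp henergy i (Finset.mem_univ i)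
  have hik := (Finset.sum_eq_zero_iff_of_nonneg fun k _ => hterm_nonneg i k).mp hi k
    ((G.mem_neighborFinset i k).mpr hik)
  have hsq : (φ k - φ i) ^ 2 = 0 :=
    (mul_eq_zero.mp hik).resolve_left (mul_pos (hw i) (hw k)).ne'
  linarith [sub_eq_zero.mp (pow_eq_zero_iff two_ne_zero |>.mp hsq)]

end SimpleGraph

noncomputable def auxPotential {L : ℕ} (G : SimpleGraph (Fin L)) [DecidableRel G.Adj]
    (κ D T : ℝ) (a : Fin L → ℝ) (i : Fin L) : ℝ :=
  1 / auxN G κ a i - D / T / a i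

section Auxin

variable {L : ℕ} (G : SimpleGraph (Fin L)) [DecidableRel G.Adj] {κ : ℝ} (D T : ℝ)
  {a : Fin L → ℝ}

theorem auxN_pos (hκ : 0 < κ) (ha : ∀ i, 0 < a i) (i : Fin L) : 0 < auxN G κ a i :=
  add_pos_of_pos_of_nonneg hκ (Finset.sum_nonneg fun j _ => (ha j).le)

variable {G}

theorem auxF_eq_mul_sum_potential (hκ : 0 < κ) (ha : ∀ i, 0 < a i) (hT : T ≠ 0) (i : Fin L) :
    auxF G κ D T a i = T * a i *
      ∑ k ∈ G.neighborFinset i, a k * (auxPotential G κ D T a k - auxPotential G κ D T a i) := by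
  unfold auxF auxPotential
  rw [Finset.mul_sum, Finset.mul_sum, Finset.mul_sum, ← Finset.sum_add_distrib]
  refine Finset.sum_congr rfl fun k _ => ?_
  have := (auxN_pos G hκ ha i).ne'
  have := (auxN_pos G hκ ha k).ne'
  have := (ha i).ne'
  have := (ha k).ne'
  field_simp
  ring

theorem quadratic_iff_auxPotential_eq (hκ : 0 < κ) (ha : ∀ i, 0 < a i) (c : ℝ) (i : Fin L) :
    (a i - D / T) * auxN G κ a i + a i = c * (a i * auxN G κ a i) ↔
      auxPotential G κ D T a i = c - 1 := by
  have := (auxN_pos G hκ ha i).ne'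
  have := (ha i).ne'
  unfold auxPotential
  generalize D / T = r
  field_simp
  constructor <;> intro h <;> linarith

end Auxin

theorem auxin_critical_iff_quadratic_general {L : ℕ} (G : SimpleGraph (Fin L))
    [DecidableRel G.Adj] (hG : G.Connected) (κ D T : ℝ) (hκ : 0 < κ) (hT : 0 < T)
    (a : Fin L → ℝ) (ha : ∀ i, 0 < a i) :
    (∀ i, auxF G κ D T a i = 0) ↔
      ∃ c : ℝ, ∀ i, (a i - D / T) * auxN G κ a i + a i = c * (a i * auxN G κ a i) := by
  set φ := auxPotential G κ D T a
  have hharmonic : (∀ i, auxF G κ D T a i = 0) ↔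
      ∀ i, ∑ k ∈ G.neighborFinset i, a k * (φ k - φ i) = 0 := by
    refine forall_congr' fun i => ?_
    rw [auxF_eq_mul_sum_potential D T hκ ha hT.ne', mul_eq_zero,
      or_iff_right (mul_pos hT (ha i)).ne']
  have hconst : (∀ i j, φ i = φ j) ↔ ∃ c : ℝ, ∀ i, φ i = c - 1 := by
    obtain ⟨v⟩ := hG.nonempty
    exact ⟨fun h => ⟨φ v + 1, fun i => by rw [h i v]; ring⟩,
      fun ⟨c, hc⟩ i j => by rw [hc i, hc j]⟩
  rw [hharmonic, hG.preconnected.weighted_harmonic_iff ha, hconst]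
  exact exists_congr fun c => forall_congr' fun i =>
    (quadratic_iff_auxPotential_eq D T hκ ha c i).symm

/-- For a connected graph with `D > 0` and `T > 0` and `a > 0`, `f(a) = 0` iff
there is a constant `c` with `(a_i − D/T)·N_i(a) + a_i = c·a_i·N_i(a)` for all `i`. -/
theorem auxin_critical_iff_quadratic {L : ℕ} (hL : 1 ≤ L) (G : SimpleGraph (Fin L))
    [DecidableRel G.Adj] (hG : G.Connected) (κ D T : ℝ) (hκ : 0 < κ) (hD : 0 < D) (hT : 0 < T)
    (a : Fin L → ℝ) (ha : ∀ i, 0 < a i) :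
    (∀ i, auxF G κ D T a i = 0) ↔
      ∃ c : ℝ, ∀ i, (a i - D / T) * auxN G κ a i + a i = c * (a i * auxN G κ a i) :=
  auxin_critical_iff_quadratic_general G hG κ D T hκ hT a ha
end
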